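/- arXiv:1506.05982 — 4 statements merged into one kernel-verified Lean document; each statement's English description precedes it below -/
import Mathlib

section
/- Let X = {P₁, P₂, P₃} be a three-point metric space with d(P₂,P₃) = a, d(P₁,P₃) = b, d(P₁,P₂) = c, a ≥ b, embedded in ℝ²_∞ via p₂ = (0,0), p₁ = (0,c), p₃ = (b,a). Let q = ((b+c−a)/2, (a+c−b)/2) and let S be the union of the three straight segments [p₁, q], [p₂, q], [p₃, q] in ℝ². Then S is a closed, geodesically convex subset of ℝ²_∞ containing {p₁, p₂, p₃} and is minimal with these properties; consequently S, with the induced metric, is isometric to the tight span T(X) of X. -/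
/-- A geodesic from `p` to `q` in a metric space: an isometric embedding of the
real interval `[0, dist p q]` sending `0` to `p` and `dist p q` to `q`. -/
def IsGeodesic {X : Type*} [MetricSpace X] (p q : X) (γ : ℝ → X) : Prop :=
  γ 0 = p ∧ γ (dist p q) = q ∧
    ∀ s ∈ Set.Icc (0 : ℝ) (dist p q), ∀ t ∈ Set.Icc (0 : ℝ) (dist p q),
      dist (γ s) (γ t) = |s - t|

/-- A subset `A` is geodesically convex if any two of its points are joined by a
geodesic of the ambient space whose image lies in `A`. -/
def GeodConvex {X : Type*} [MetricSpace X] (A : Set X) : Prop :=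
  ∀ p ∈ A, ∀ q ∈ A, ∃ γ : ℝ → X, IsGeodesic p q γ ∧
    ∀ t ∈ Set.Icc (0 : ℝ) (dist p q), γ t ∈ A

/-- The tight span `T(X)` of a subset `X` of a metric space: the set of
functions `f : X → ℝ≥0` with `f x + f y ≥ d(x,y)` for all `x y ∈ X` and
`inf_{y ∈ X} (f x + f y − d(x,y)) = 0` for all `x ∈ X`. -/
def TightSpanSet {α : Type*} [MetricSpace α] (X : Set α) : Set (↥X → ℝ) :=
  {f | (∀ x : X, 0 ≤ f x) ∧ (∀ x y : X, dist (x : α) (y : α) ≤ f x + f y) ∧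
    ∀ x : X, (⨅ y : X, (f x + f y - dist (x : α) (y : α))) = 0}

open Set

namespace TripodAux

structure Good (a b c : ℝ) : Prop where
  ha : 0 ≤ a
  hb : 0 ≤ b
  hc : 0 ≤ c
  t1 : a ≤ b + c
  t2 : b ≤ a + c
  t3 : c ≤ a + b
  ab : b ≤ a

noncomputable def L (a b c : ℝ) : Fin 3 → ℝ
  | 0 => (b+c-a)/2 | 1 => (a+c-b)/2 | 2 => (a+b-c)/2
def P (a b c : ℝ) : Fin 3 → ℝ × ℝ
  | 0 => (0,c) | 1 => (0,0) | 2 => (b,a)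
noncomputable def Q (a b c : ℝ) : ℝ × ℝ := ((b+c-a)/2, (a+c-b)/2)
noncomputable def leg (a b c : ℝ) (i : Fin 3) (θ : ℝ) : ℝ × ℝ :=
  (1-θ) • P a b c i + θ • Q a b c

variable {a b c : ℝ}

lemma L_nonneg (H : Good a b c) (i : Fin 3) : 0 ≤ L a b c i := by
  obtain ⟨ha,hb,hc,t1,t2,t3,ab⟩ := H
  fin_cases i <;> simp [L] <;> linarith

lemma leg_zero (i : Fin 3) : leg a b c i 0 = P a b c i := by simp [leg]
lemma leg_one (i : Fin 3) : leg a b c i 1 = Q a b c := by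
  simp [leg]

lemma seg_eq (i : Fin 3) : segment ℝ (P a b c i) (Q a b c) = leg a b c i '' Icc 0 1 := by
  rw [segment_eq_image ℝ]; rfl

private lemma dmax1 {x1 x2 y1 y2 m : ℝ} (hx : |x1 - y1| ≤ m) (hy : |x2 - y2| = m) :
    dist ((x1,x2) : ℝ × ℝ) ((y1,y2) : ℝ × ℝ) = m := by
  rw [Prod.dist_eq]; simp only [Real.dist_eq]; rw [hy]; exact max_eq_right hx

private lemma dmax2 {x1 x2 y1 y2 m : ℝ} (hx : |x1 - y1| = m) (hy : |x2 - y2| ≤ m) :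
    dist ((x1,x2) : ℝ × ℝ) ((y1,y2) : ℝ × ℝ) = m := by
  rw [Prod.dist_eq]; simp only [Real.dist_eq]; rw [hx]; exact max_eq_left hy

lemma dist_leg_leg_same (H : Good a b c) (i : Fin 3) {θ η : ℝ}
    (hθ : θ ∈ Icc (0:ℝ) 1) (hη : η ∈ Icc (0:ℝ) 1) :
    dist (leg a b c i θ) (leg a b c i η) = |θ - η| * L a b c i := by
  obtain ⟨ha,hb,hc,t1,t2,t3,ab⟩ := H
  obtain ⟨h0,h1⟩ := hθ; obtain ⟨h2,h3⟩ := hη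
  fin_cases i <;>
    simp only [leg, P, Q, L, Prod.smul_mk, smul_eq_mul, Prod.mk_add_mk]
  · apply dmax1 (m := |θ-η| * ((b+c-a)/2))
    · rw [show (1-θ)*0 + θ*((b+c-a)/2) - ((1-η)*0 + η*((b+c-a)/2)) = (θ-η)*((b+c-a)/2) by ring,
        abs_mul, abs_of_nonneg (by linarith : (0:ℝ) ≤ (b+c-a)/2)]
    · rw [show (1-θ)*c + θ*((a+c-b)/2) - ((1-η)*c + η*((a+c-b)/2)) = (θ-η)*(-((b+c-a)/2)) by ring,
        abs_mul, abs_neg, abs_of_nonneg (by linarith : (0:ℝ) ≤ (b+c-a)/2)]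
  · apply dmax1 (m := |θ-η| * ((a+c-b)/2))
    · rw [show (1-θ)*0 + θ*((b+c-a)/2) - ((1-η)*0 + η*((b+c-a)/2)) = (θ-η)*((b+c-a)/2) by ring,
        abs_mul, abs_of_nonneg (by linarith : (0:ℝ) ≤ (b+c-a)/2)]
      have : |θ - η| * ((b+c-a)/2) ≤ |θ-η| * ((a+c-b)/2) :=
        mul_le_mul_of_nonneg_left (by linarith) (abs_nonneg _)
      linarith
    · rw [show (1-θ)*0 + θ*((a+c-b)/2) - ((1-η)*0 + η*((a+c-b)/2)) = (θ-η)*((a+c-b)/2) by ring,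
        abs_mul, abs_of_nonneg (by linarith : (0:ℝ) ≤ (a+c-b)/2)]
  · apply dmax1 (m := |θ-η| * ((a+b-c)/2))
    · rw [show (1-θ)*b + θ*((b+c-a)/2) - ((1-η)*b + η*((b+c-a)/2)) = (θ-η)*(-((a+b-c)/2)) by ring,
        abs_mul, abs_neg, abs_of_nonneg (by linarith : (0:ℝ) ≤ (a+b-c)/2)]
    · rw [show (1-θ)*a + θ*((a+c-b)/2) - ((1-η)*a + η*((a+c-b)/2)) = (θ-η)*(-((a+b-c)/2)) by ring,
        abs_mul, abs_neg, abs_of_nonneg (by linarith : (0:ℝ) ≤ (a+b-c)/2)]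

end TripodAux

namespace TripodAux
variable {a b c : ℝ}

set_option maxHeartbeats 2000000 in
lemma dist_leg_leg_ne (H : Good a b c) {i j : Fin 3} (hij : i ≠ j) {θ η : ℝ}
    (hθ : θ ∈ Icc (0:ℝ) 1) (hη : η ∈ Icc (0:ℝ) 1) :
    dist (leg a b c i θ) (leg a b c j η) = (1-θ) * L a b c i + (1-η) * L a b c j := by
  obtain ⟨ha,hb,hc,t1,t2,t3,ab⟩ := H
  obtain ⟨h0,h1⟩ := hθ; obtain ⟨h2,h3⟩ := hη
  have e1 : (0:ℝ) ≤ (b+c-a)/2 := by linarith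
  have e2 : (0:ℝ) ≤ (a+c-b)/2 := by linarith
  have e3 : (0:ℝ) ≤ (a+b-c)/2 := by linarith
  have f1 : (0:ℝ) ≤ 1 - θ := by linarith
  have f2 : (0:ℝ) ≤ 1 - η := by linarith
  have e21 : (0:ℝ) ≤ (a+c-b)/2 - (b+c-a)/2 := by linarith
  fin_cases i <;> fin_cases j <;>
      simp only [leg, P, Q, L, Prod.smul_mk, smul_eq_mul, Prod.mk_add_mk]
  -- (0,0)
  · exact absurd rfl hij
  -- case (0,1)
  · apply dmax1
    · apply abs_le.mpr
      constructor <;>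
        nlinarith [mul_nonneg f1 e1, mul_nonneg f2 e2, mul_nonneg f2 e1, mul_nonneg f1 e2,
          mul_nonneg f2 e21, mul_nonneg f1 e21]
    · rw [show (1-θ)*c + θ*((a+c-b)/2) - ((1-η)*0 + η*((a+c-b)/2))
          = ((1-θ)*((b+c-a)/2) + (1-η)*((a+c-b)/2)) by ring]
      exact abs_of_nonneg (by nlinarith [mul_nonneg f1 e1, mul_nonneg f2 e2])
  -- case (0,2)
  · apply dmax2
    · rw [show (1-θ)*0 + θ*((b+c-a)/2) - ((1-η)*b + η*((b+c-a)/2))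
          = -((1-θ)*((b+c-a)/2) + (1-η)*((a+b-c)/2)) by ring, abs_neg]
      exact abs_of_nonneg (by nlinarith [mul_nonneg f1 e1, mul_nonneg f2 e3])
    · apply abs_le.mpr
      constructor <;>
        nlinarith [mul_nonneg f1 e1, mul_nonneg f2 e3, mul_nonneg f1 e3, mul_nonneg f2 e1]
  -- case (1,0)
  · apply dmax1
    · apply abs_le.mpr
      constructor <;>
        nlinarith [mul_nonneg f1 e1, mul_nonneg f2 e2, mul_nonneg f2 e1, mul_nonneg f1 e2,
          mul_nonneg f2 e21, mul_nonneg f1 e21]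
    · rw [show (1-θ)*0 + θ*((a+c-b)/2) - ((1-η)*c + η*((a+c-b)/2))
          = -((1-θ)*((a+c-b)/2) + (1-η)*((b+c-a)/2)) by ring, abs_neg]
      exact abs_of_nonneg (by nlinarith [mul_nonneg f1 e2, mul_nonneg f2 e1])
  -- (1,1)
  · exact absurd rfl hij
  -- case (1,2)
  · apply dmax1
    · apply abs_le.mpr
      constructor <;>
        nlinarith [mul_nonneg f1 e1, mul_nonneg f2 e3, mul_nonneg f1 e21, mul_nonneg f1 e2]
    · rw [show (1-θ)*0 + θ*((a+c-b)/2) - ((1-η)*a + η*((a+c-b)/2))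
          = -((1-θ)*((a+c-b)/2) + (1-η)*((a+b-c)/2)) by ring, abs_neg]
      exact abs_of_nonneg (by nlinarith [mul_nonneg f1 e2, mul_nonneg f2 e3])
  -- case (2,0)
  · apply dmax2
    · rw [show (1-θ)*b + θ*((b+c-a)/2) - ((1-η)*0 + η*((b+c-a)/2))
          = ((1-θ)*((a+b-c)/2) + (1-η)*((b+c-a)/2)) by ring]
      exact abs_of_nonneg (by nlinarith [mul_nonneg f1 e3, mul_nonneg f2 e1])
    · apply abs_le.mpr
      constructor <;>
        nlinarith [mul_nonneg f1 e3, mul_nonneg f2 e1, mul_nonneg f1 e1, mul_nonneg f2 e3]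
  -- case (2,1)
  · apply dmax1
    · apply abs_le.mpr
      constructor <;>
        nlinarith [mul_nonneg f1 e3, mul_nonneg f2 e1, mul_nonneg f2 e21, mul_nonneg f2 e2]
    · rw [show (1-θ)*a + θ*((a+c-b)/2) - ((1-η)*0 + η*((a+c-b)/2))
          = ((1-θ)*((a+b-c)/2) + (1-η)*((a+c-b)/2)) by ring]
      exact abs_of_nonneg (by nlinarith [mul_nonneg f1 e3, mul_nonneg f2 e2])
  -- (2,2)
  · exact absurd rfl hij

end TripodAux

namespace TripodAux
variable {a b c : ℝ}

lemma dist_leg_P_self (H : Good a b c) (i : Fin 3) {θ : ℝ} (hθ : θ ∈ Icc (0:ℝ) 1) :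
    dist (leg a b c i θ) (P a b c i) = θ * L a b c i := by
  have := dist_leg_leg_same H i hθ (by constructor <;> norm_num : (0:ℝ) ∈ Icc (0:ℝ) 1)
  rw [leg_zero] at this
  rw [this, sub_zero, abs_of_nonneg hθ.1]

lemma dist_leg_P_ne (H : Good a b c) {i j : Fin 3} (hij : i ≠ j) {θ : ℝ}
    (hθ : θ ∈ Icc (0:ℝ) 1) :
    dist (leg a b c i θ) (P a b c j) = L a b c i + L a b c j - θ * L a b c i := by
  have := dist_leg_leg_ne H hij hθ (by constructor <;> norm_num : (0:ℝ) ∈ Icc (0:ℝ) 1)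
  rw [leg_zero] at this
  rw [this]; ring

lemma dist_leg_Q (H : Good a b c) (i : Fin 3) {θ : ℝ} (hθ : θ ∈ Icc (0:ℝ) 1) :
    dist (leg a b c i θ) (Q a b c) = (1 - θ) * L a b c i := by
  have := dist_leg_leg_same H i hθ (by constructor <;> norm_num : (1:ℝ) ∈ Icc (0:ℝ) 1)
  rw [leg_one] at this
  rw [this, abs_of_nonpos (by linarith [hθ.2])]; ring

lemma dist_P_P (H : Good a b c) {i j : Fin 3} (hij : i ≠ j) :
    dist (P a b c i) (P a b c j) = L a b c i + L a b c j := by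
  have h0 : (0:ℝ) ∈ Icc (0:ℝ) 1 := by constructor <;> norm_num
  have := dist_leg_leg_ne H hij h0 h0
  rw [leg_zero, leg_zero] at this
  rw [this]; ring

lemma dist_P_Q (H : Good a b c) (i : Fin 3) :
    dist (P a b c i) (Q a b c) = L a b c i := by
  have := dist_leg_Q H i (by constructor <;> norm_num : (0:ℝ) ∈ Icc (0:ℝ) 1)
  rw [leg_zero] at this; rw [this]; ring

/-- Degenerate leg: if `L i = 0` then every point of leg `i` is `Q`. -/
lemma leg_eq_Q (H : Good a b c) {i : Fin 3} (hL : L a b c i = 0) {θ : ℝ}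
    (hθ : θ ∈ Icc (0:ℝ) 1) : leg a b c i θ = Q a b c := by
  apply eq_of_dist_eq_zero
  rw [dist_leg_Q H i hθ, hL, mul_zero]

end TripodAux

open Set
namespace TripodAux
variable {a b c : ℝ}

lemma geod_const {u v : ℝ × ℝ} (h : dist u v = 0) :
    ∃ γ : ℝ → ℝ × ℝ, IsGeodesic u v γ ∧ ∀ r, γ r = u := by
  refine ⟨fun _ => u, ⟨rfl, ?_, ?_⟩, fun _ => rfl⟩
  · rw [eq_of_dist_eq_zero h]
  · intro s hs t ht
    rw [h] at hs ht
    have hs0 : s = 0 := le_antisymm hs.2 hs.1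
    have ht0 : t = 0 := le_antisymm ht.2 ht.1
    subst hs0; subst ht0; simp

/-- Geodesic between two points on the same leg. -/
lemma geod_same (H : Good a b c) (i : Fin 3) {θ η : ℝ}
    (hθ : θ ∈ Icc (0:ℝ) 1) (hη : η ∈ Icc (0:ℝ) 1) :
    ∃ γ : ℝ → ℝ × ℝ, IsGeodesic (leg a b c i θ) (leg a b c i η) γ ∧
      ∀ r ∈ Icc (0:ℝ) (dist (leg a b c i θ) (leg a b c i η)),
        ∃ k : Fin 3, ∃ σ ∈ Icc (0:ℝ) 1, γ r = leg a b c k σ := by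
  set u := leg a b c i θ with hu
  set v := leg a b c i η with hv
  by_cases hd : dist u v = 0
  · obtain ⟨γ, hg, hc⟩ := geod_const hd
    exact ⟨γ, hg, fun r _ => ⟨i, θ, hθ, by rw [hc]⟩⟩
  · set d := dist u v with hdd
    have hdist : d = |θ - η| * L a b c i := dist_leg_leg_same H i hθ hη
    have hdpos : 0 < d := lt_of_le_of_ne dist_nonneg (Ne.symm hd)
    have hLpos : 0 < L a b c i := by
      rcases lt_or_eq_of_le (L_nonneg H i) with h | h
      · exact h
      · exfalso; apply hd; rw [hdist, ← h, mul_zero]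
    -- parameter function
    have hparam : ∀ r ∈ Icc (0:ℝ) d, θ + r * (η - θ) / d ∈ Icc (0:ℝ) 1 := by
      intro r hr
      have h1 : 0 ≤ r / d := div_nonneg hr.1 hdpos.le
      have h2 : r / d ≤ 1 := (div_le_one hdpos).mpr hr.2
      have : θ + r * (η - θ) / d = (1 - r/d) * θ + (r/d) * η := by field_simp; ring
      rw [this]
      constructor
      · nlinarith [hθ.1, hη.1]
      · nlinarith [hθ.2, hη.2]
    refine ⟨fun r => leg a b c i (θ + r * (η - θ) / d), ⟨?_, ?_, ?_⟩, ?_⟩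
    · norm_num [hu]
    · show leg a b c i (θ + dist u v * (η - θ) / dist u v) = v
      rw [← hdd]
      have : θ + d * (η - θ) / d = η := by field_simp; ring
      rw [this]
    · intro s hs t ht
      rw [← hdd] at hs ht
      rw [dist_leg_leg_same H i (hparam s hs) (hparam t ht)]
      have e1 : θ + s * (η - θ) / d - (θ + t * (η - θ) / d) = (s - t) * (η - θ) / d := by
        ring
      rw [e1, abs_div, abs_mul, abs_of_pos hdpos]
      rw [abs_sub_comm η θ] at *
      rw [div_mul_eq_mul_div, mul_assoc, ← hdist]
      rw [mul_div_assoc, div_self hd, mul_one]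
    · intro r hr
      exact ⟨i, _, hparam r hr, rfl⟩

end TripodAux

namespace TripodAux
variable {a b c : ℝ}

lemma one_mem01 : (1:ℝ) ∈ Icc (0:ℝ) 1 := by constructor <;> norm_num

lemma geod_ne (H : Good a b c) {i j : Fin 3} (hij : i ≠ j) {θ η : ℝ}
    (hθ : θ ∈ Icc (0:ℝ) 1) (hη : η ∈ Icc (0:ℝ) 1)
    (hLi : 0 < L a b c i) (hLj : 0 < L a b c j) :
    ∃ γ : ℝ → ℝ × ℝ, IsGeodesic (leg a b c i θ) (leg a b c j η) γ ∧
      ∀ r ∈ Icc (0:ℝ) (dist (leg a b c i θ) (leg a b c j η)),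
        ∃ k : Fin 3, ∃ σ ∈ Icc (0:ℝ) 1, γ r = leg a b c k σ := by
  have hdist : dist (leg a b c i θ) (leg a b c j η)
      = (1-θ) * L a b c i + (1-η) * L a b c j := dist_leg_leg_ne H hij hθ hη
  set Li := L a b c i with hLi'
  set Lj := L a b c j with hLj'
  set d := (1-θ) * Li + (1-η) * Lj with hd
  have hsplit0 : 0 ≤ (1-θ) * Li := mul_nonneg (by linarith [hθ.2]) hLi.le
  have hrest0 : 0 ≤ (1-η) * Lj := mul_nonneg (by linarith [hη.2]) hLj.le
  have hparami : ∀ r : ℝ, 0 ≤ r → r ≤ (1-θ)*Li → θ + r/Li ∈ Icc (0:ℝ) 1 := by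
    intro r h1 h2
    have h3 : 0 ≤ r / Li := div_nonneg h1 hLi.le
    have h4 : r / Li ≤ 1 - θ := by
      rw [div_le_iff₀ hLi]; linarith
    exact ⟨by linarith [hθ.1], by linarith⟩
  have hparamj : ∀ r : ℝ, (1-θ)*Li ≤ r → r ≤ d → η + (d-r)/Lj ∈ Icc (0:ℝ) 1 := by
    intro r h1 h2
    have h3 : 0 ≤ (d-r) / Lj := div_nonneg (by linarith) hLj.le
    have h4 : (d-r) / Lj ≤ 1 - η := by
      rw [div_le_iff₀ hLj]; linarith
    exact ⟨by linarith [hη.1], by linarith⟩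
  set γ : ℝ → ℝ × ℝ :=
    fun r => if r ≤ (1-θ)*Li then leg a b c i (θ + r/Li) else leg a b c j (η + (d-r)/Lj)
    with hγ
  have key : ∀ s t : ℝ, s ∈ Icc (0:ℝ) d → t ∈ Icc (0:ℝ) d → s ≤ t →
      dist (γ s) (γ t) = t - s := by
    intro s t hs ht hst
    by_cases h1 : s ≤ (1-θ)*Li <;> by_cases h2 : t ≤ (1-θ)*Li
    · rw [hγ]; simp only [if_pos h1, if_pos h2]
      rw [dist_leg_leg_same H i (hparami s hs.1 h1) (hparami t ht.1 h2)]
      have e : θ + s/Li - (θ + t/Li) = (s-t)/Li := by ring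
      rw [e, abs_div, abs_of_pos hLi, div_mul_cancel₀ _ hLi.ne']
      rw [abs_of_nonpos (by linarith)]; ring
    · rw [hγ]; simp only [if_pos h1, if_neg h2]
      rw [dist_leg_leg_ne H hij (hparami s hs.1 h1) (hparamj t (by linarith) ht.2)]
      have e1 : (1-(θ+s/Li))*Li = (1-θ)*Li - s := by field_simp; ring
      have e2 : (1-(η+(d-t)/Lj))*Lj = (1-η)*Lj - (d-t) := by field_simp; ring
      rw [e1, e2]; rw [hd]; ring
    · linarith
    · rw [hγ]; simp only [if_neg h1, if_neg h2]
      rw [dist_leg_leg_same H j (hparamj s (by linarith) hs.2) (hparamj t (by linarith) ht.2)]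
      have e : η + (d-s)/Lj - (η + (d-t)/Lj) = (t-s)/Lj := by ring
      rw [e, abs_div, abs_of_pos hLj, div_mul_cancel₀ _ hLj.ne']
      rw [abs_of_nonneg (by linarith)]
  refine ⟨γ, ⟨?_, ?_, ?_⟩, ?_⟩
  · rw [hγ]; simp only [if_pos hsplit0]
    norm_num
  · rw [hdist]
    by_cases hdl : d ≤ (1-θ)*Li
    · have h2 : (1-η)*Lj = 0 := le_antisymm (by linarith [hd]) hrest0
      have hη1 : η = 1 := by
        rcases mul_eq_zero.mp h2 with h | h
        · linarith
        · exact absurd h hLj.ne'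
      have hd' : d = (1-θ)*Li := by rw [hd, h2, add_zero]
      rw [hγ]; simp only [if_pos hdl]
      have e : θ + d/Li = 1 := by rw [hd']; field_simp; ring
      rw [e, leg_one, hη1, leg_one]
    · rw [hγ]; simp only [if_neg hdl]
      have e : η + (d-d)/Lj = η := by simp
      rw [e]
  · intro s hs t ht
    rw [hdist] at hs ht
    rcases le_total s t with h | h
    · rw [key s t hs ht h, abs_sub_comm, abs_of_nonneg (by linarith)]
    · rw [dist_comm, key t s ht hs h, abs_of_nonneg (by linarith)]
  · intro r hr
    rw [hdist] at hr
    by_cases h1 : r ≤ (1-θ)*Li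
    · refine ⟨i, θ + r/Li, hparami r hr.1 h1, ?_⟩
      rw [hγ]; simp only [if_pos h1]
    · refine ⟨j, η + (d-r)/Lj, hparamj r (by linarith) hr.2, ?_⟩
      rw [hγ]; simp only [if_neg h1]

lemma geod_any (H : Good a b c) (i j : Fin 3) {θ η : ℝ}
    (hθ : θ ∈ Icc (0:ℝ) 1) (hη : η ∈ Icc (0:ℝ) 1) :
    ∃ γ : ℝ → ℝ × ℝ, IsGeodesic (leg a b c i θ) (leg a b c j η) γ ∧
      ∀ r ∈ Icc (0:ℝ) (dist (leg a b c i θ) (leg a b c j η)),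
        ∃ k : Fin 3, ∃ σ ∈ Icc (0:ℝ) 1, γ r = leg a b c k σ := by
  by_cases hij : i = j
  · subst hij; exact geod_same H i hθ hη
  · by_cases hLi : L a b c i = 0
    · have h : leg a b c i θ = leg a b c j 1 := by rw [leg_eq_Q H hLi hθ, leg_one]
      rw [h]
      exact geod_same H j one_mem01 hη
    · by_cases hLj : L a b c j = 0
      · have h : leg a b c j η = leg a b c i 1 := by rw [leg_eq_Q H hLj hη, leg_one]
        rw [h]
        exact geod_same H i hθ one_mem01
      · exact geod_ne H hij hθ hη
          (lt_of_le_of_ne (L_nonneg H i) (Ne.symm hLi))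
          (lt_of_le_of_ne (L_nonneg H j) (Ne.symm hLj))

end TripodAux

open Set
namespace TripodAux
variable {a b c : ℝ}

lemma rep_unique (H : Good a b c) {i j : Fin 3} {θ η : ℝ}
    (hθ : θ ∈ Icc (0:ℝ) 1) (hη : η ∈ Icc (0:ℝ) 1)
    (h1 : dist (leg a b c j η) (P a b c i) = θ * L a b c i)
    (h2 : dist (leg a b c j η) (Q a b c) = (1-θ) * L a b c i) :
    leg a b c j η = leg a b c i θ := by
  apply eq_of_dist_eq_zero
  by_cases hij : j = i
  · subst hij
    rw [dist_leg_leg_same H j hη hθ]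
    rw [dist_leg_P_self H j hη] at h1
    have e : |η - θ| * L a b c j = |η * L a b c j - θ * L a b c j| := by
      rw [← abs_of_nonneg (L_nonneg H j), ← abs_mul]
      congr 1; rw [abs_of_nonneg (L_nonneg H j)]; ring
    rw [e, h1, sub_self, abs_zero]
  · rw [dist_leg_leg_ne H hij hη hθ]
    rw [dist_leg_P_ne H hij hη] at h1
    rw [dist_leg_Q H j hη] at h2
    nlinarith [h1, h2]

lemma eq_Q_of_dist0 (H : Good a b c) {j : Fin 3} {η : ℝ} (hη : η ∈ Icc (0:ℝ) 1)
    (h0 : dist (leg a b c j η) (P a b c 0) = L a b c 0) :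
    leg a b c j η = Q a b c := by
  apply eq_of_dist_eq_zero
  rw [dist_leg_Q H j hη]
  by_cases hj : j = 0
  · subst hj
    rw [dist_leg_P_self H 0 hη] at h0
    nlinarith [h0]
  · rw [dist_leg_P_ne H hj hη] at h0
    nlinarith [h0]

lemma surj_arith {m0 m1 m2 f1 f2 f3 : ℝ}
    (hm0 : 0 ≤ m0) (hm1 : 0 ≤ m1) (hm2 : 0 ≤ m2)
    (hf1 : 0 ≤ f1) (hf2 : 0 ≤ f2) (hf3 : 0 ≤ f3)
    (t12 : m0 + m1 ≤ f1 + f2) (t13 : m0 + m2 ≤ f1 + f3) (t23 : m1 + m2 ≤ f2 + f3)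
    (E1 : f1 = 0 ∨ f1 + f2 = m0 + m1 ∨ f1 + f3 = m0 + m2)
    (E2 : f1 + f2 = m0 + m1 ∨ f2 = 0 ∨ f2 + f3 = m1 + m2)
    (E3 : f1 + f3 = m0 + m2 ∨ f2 + f3 = m1 + m2 ∨ f3 = 0) :
    (f1 ≤ m0 ∧ f2 = m0 + m1 - f1 ∧ f3 = m0 + m2 - f1) ∨
    (f2 ≤ m1 ∧ f1 = m0 + m1 - f2 ∧ f3 = m1 + m2 - f2) ∨
    (f3 ≤ m2 ∧ f1 = m0 + m2 - f3 ∧ f2 = m1 + m2 - f3) := by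
  rcases E1 with h1|h1|h1 <;> rcases E2 with h2|h2|h2 <;> rcases E3 with h3|h3|h3 <;>
    first
      | (left; exact ⟨by linarith, by linarith, by linarith⟩)
      | (right; left; exact ⟨by linarith, by linarith, by linarith⟩)
      | (right; right; exact ⟨by linarith, by linarith, by linarith⟩)

lemma profile (H : Good a b c) (i : Fin 3) {g : Fin 3 → ℝ}
    (hgi : 0 ≤ g i) (hle : g i ≤ L a b c i)
    (heq : ∀ j, j ≠ i → g j = L a b c i + L a b c j - g i) :
    ∃ θ ∈ Icc (0:ℝ) 1, ∀ k, dist (leg a b c i θ) (P a b c k) = g k := by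
  by_cases hL : L a b c i = 0
  · have hg0 : g i = 0 := le_antisymm (hL ▸ hle) hgi
    refine ⟨0, ⟨le_refl _, zero_le_one⟩, fun k => ?_⟩
    by_cases hk : k = i
    · subst hk
      rw [dist_leg_P_self H k ⟨le_refl _, zero_le_one⟩, hg0, zero_mul]
    · rw [dist_leg_P_ne H (fun h => hk h.symm) ⟨le_refl _, zero_le_one⟩,
        heq k hk, hg0]; ring
  · have hLpos : 0 < L a b c i := lt_of_le_of_ne (L_nonneg H i) (Ne.symm hL)
    have hθm : g i / L a b c i ∈ Icc (0:ℝ) 1 :=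
      ⟨div_nonneg hgi hLpos.le, (div_le_one hLpos).mpr hle⟩
    have hcan : g i / L a b c i * L a b c i = g i := div_mul_cancel₀ _ hL
    refine ⟨g i / L a b c i, hθm, fun k => ?_⟩
    by_cases hk : k = i
    · subst hk
      rw [dist_leg_P_self H k hθm, hcan]
    · rw [dist_leg_P_ne H (fun h => hk h.symm) hθm, hcan, heq k hk]

end TripodAux

open Set TripodAux

lemma abs_mul_L {x y Lv : ℝ} (hL : 0 ≤ Lv) : |x - y| * Lv = |x * Lv - y * Lv| := by
  rw [← abs_of_nonneg hL, ← abs_mul]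
  congr 1
  rw [abs_of_nonneg hL]
  ring

/-- The tripod `S = [p₁,q] ∪ [p₂,q] ∪ [p₃,q]` built on the three-point metric
space with side lengths `a ≥ b`, `c` embedded in `ℝ²_∞` as `p₂ = (0,0)`,
`p₁ = (0,c)`, `p₃ = (b,a)`, with `q = ((b+c−a)/2, (a+c−b)/2)`, is a closed,
geodesically convex subset of `ℝ²_∞` containing `{p₁,p₂,p₃}`, minimal with
these properties; consequently `S` is isometric to the tight span of
`{p₁,p₂,p₃}`. -/
theorem tripod_is_tightSpan (a b c : ℝ)
    (ha : 0 ≤ a) (hb : 0 ≤ b) (hc : 0 ≤ c)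
    (htri1 : a ≤ b + c) (htri2 : b ≤ a + c) (htri3 : c ≤ a + b) (hab : b ≤ a)
    (p₁ p₂ p₃ q : ℝ × ℝ)
    (hp₁ : p₁ = (0, c)) (hp₂ : p₂ = (0, 0)) (hp₃ : p₃ = (b, a))
    (hq : q = ((b + c - a) / 2, (a + c - b) / 2))
    (S : Set (ℝ × ℝ))
    (hS : S = segment ℝ p₁ q ∪ segment ℝ p₂ q ∪ segment ℝ p₃ q) :
    IsClosed S ∧ GeodConvex S ∧ {p₁, p₂, p₃} ⊆ S ∧
      (∀ S' : Set (ℝ × ℝ), S' ⊆ S → IsClosed S' → GeodConvex S' →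
        {p₁, p₂, p₃} ⊆ S' → S' = S) ∧
      ∃ Φ : ↥S → ↥(TightSpanSet {p₁, p₂, p₃}),
        Function.Bijective Φ ∧
          ∀ u v : ↥S,
            (⨆ x : ({p₁, p₂, p₃} : Set (ℝ × ℝ)), |(Φ u).1 x - (Φ v).1 x|) = dist u v := by

  have G : Good a b c := ⟨ha, hb, hc, htri1, htri2, htri3, hab⟩
  subst hp₁ hp₂ hp₃ hq
  have hseg1 : segment ℝ ((0:ℝ), c) (((b+c-a)/2, (a+c-b)/2) : ℝ × ℝ)
      = leg a b c 0 '' Icc 0 1 := seg_eq 0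
  have hseg2 : segment ℝ ((0:ℝ), (0:ℝ)) (((b+c-a)/2, (a+c-b)/2) : ℝ × ℝ)
      = leg a b c 1 '' Icc 0 1 := seg_eq 1
  have hseg3 : segment ℝ (b, a) (((b+c-a)/2, (a+c-b)/2) : ℝ × ℝ)
      = leg a b c 2 '' Icc 0 1 := seg_eq 2
  have hS2 : S = leg a b c 0 '' Icc 0 1 ∪ leg a b c 1 '' Icc 0 1 ∪ leg a b c 2 '' Icc 0 1 := by
    rw [hS, hseg1, hseg2, hseg3]
  have hmem : ∀ u : ℝ × ℝ, u ∈ S ↔ ∃ i : Fin 3, ∃ σ ∈ Icc (0:ℝ) 1, u = leg a b c i σ := by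
    intro u
    rw [hS2]
    simp only [mem_union, mem_image]
    constructor
    · rintro ((⟨σ,hσ,he⟩|⟨σ,hσ,he⟩)|⟨σ,hσ,he⟩)
      exacts [⟨0,σ,hσ,he.symm⟩, ⟨1,σ,hσ,he.symm⟩, ⟨2,σ,hσ,he.symm⟩]
    · rintro ⟨i,σ,hσ,rfl⟩
      fin_cases i
      · exact Or.inl (Or.inl ⟨σ,hσ,rfl⟩)
      · exact Or.inl (Or.inr ⟨σ,hσ,rfl⟩)
      · exact Or.inr ⟨σ,hσ,rfl⟩
  have hmem' : ∀ (i : Fin 3) (σ : ℝ), σ ∈ Icc (0:ℝ) 1 → leg a b c i σ ∈ S :=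
    fun i σ hσ => (hmem _).mpr ⟨i, σ, hσ, rfl⟩
  -- 1. closed
  have hclosed : IsClosed S := by
    rw [hS]
    have hcl : ∀ x y : ℝ × ℝ, IsClosed (segment ℝ x y) := by
      intro x y
      rw [segment_eq_image ℝ]
      exact (isCompact_Icc.image (by continuity)).isClosed
    exact ((hcl _ _).union (hcl _ _)).union (hcl _ _)
  -- 2. contains the three points
  have hsub : ({((0:ℝ),c), ((0:ℝ),(0:ℝ)), (b,a)} : Set (ℝ × ℝ)) ⊆ S := by
    intro x hx
    rw [hS]
    simp only [mem_insert_iff, mem_singleton_iff] at hx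
    rcases hx with rfl | rfl | rfl
    · exact Or.inl (Or.inl (left_mem_segment ℝ _ _))
    · exact Or.inl (Or.inr (left_mem_segment ℝ _ _))
    · exact Or.inr (left_mem_segment ℝ _ _)
  -- 3. geodesically convex
  have hgeo : GeodConvex S := by
    intro u hu v hv
    obtain ⟨i, σ, hσ, rfl⟩ := (hmem u).mp hu
    obtain ⟨j, η, hη, rfl⟩ := (hmem v).mp hv
    obtain ⟨γ, hγ1, hγ2⟩ := geod_any G i j hσ hη
    refine ⟨γ, hγ1, fun t ht => ?_⟩
    obtain ⟨k, τ, hτ, he⟩ := hγ2 t ht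
    rw [he]; exact hmem' k τ hτ
  -- membership of vertices
  have hPe : ∀ (T : Set (ℝ × ℝ)), ({((0:ℝ),c), ((0:ℝ),(0:ℝ)), (b,a)} : Set (ℝ × ℝ)) ⊆ T →
      ∀ k : Fin 3, P a b c k ∈ T := by
    intro T hT k
    fin_cases k <;> apply hT <;> simp [P]
  -- 4. minimality
  have hmin : ∀ S' : Set (ℝ × ℝ), S' ⊆ S → IsClosed S' → GeodConvex S' →
      ({((0:ℝ),c), ((0:ℝ),(0:ℝ)), (b,a)} : Set (ℝ × ℝ)) ⊆ S' → S' = S := by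
    intro S' hsub' _ hgc hpts
    apply Subset.antisymm hsub'
    have hPe' : ∀ k : Fin 3, P a b c k ∈ S' := hPe S' hpts
    -- q ∈ S'
    have hQS' : Q a b c ∈ S' := by
      obtain ⟨γ, ⟨hg0, hg1, hgd⟩, hgin⟩ := hgc _ (hPe' 0) _ (hPe' 1)
      have hd01 : dist (P a b c 0) (P a b c 1) = L a b c 0 + L a b c 1 :=
        dist_P_P G (by decide)
      have hL0 := L_nonneg G 0
      have hL1 := L_nonneg G 1
      have hr : L a b c 0 ∈ Icc (0:ℝ) (dist (P a b c 0) (P a b c 1)) := by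
        rw [hd01]; exact ⟨hL0, by linarith⟩
      have hu' : γ (L a b c 0) ∈ S' := hgin _ hr
      obtain ⟨j, η, hη, he⟩ := (hmem _).mp (hsub' hu')
      have h0' : dist (γ (L a b c 0)) (P a b c 0) = L a b c 0 := by
        conv_lhs => rw [← hg0]
        rw [hgd _ hr 0 ⟨le_refl _, dist_nonneg⟩, sub_zero, abs_of_nonneg hL0]
      rw [he] at h0' hu'
      rwa [eq_Q_of_dist0 G hη h0'] at hu'
    intro u hu
    obtain ⟨i, σ, hσ, rfl⟩ := (hmem u).mp hu
    obtain ⟨γ, ⟨hg0, hg1, hgd⟩, hgin⟩ := hgc _ (hPe' i) _ hQS'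
    have hdPQ : dist (P a b c i) (Q a b c) = L a b c i := dist_P_Q G i
    have hLi := L_nonneg G i
    have hr0 : 0 ≤ σ * L a b c i := mul_nonneg hσ.1 hLi
    have hr1 : σ * L a b c i ≤ L a b c i := mul_le_of_le_one_left hLi hσ.2
    have hr : σ * L a b c i ∈ Icc (0:ℝ) (dist (P a b c i) (Q a b c)) := by
      rw [hdPQ]; exact ⟨hr0, hr1⟩
    have hu' : γ (σ * L a b c i) ∈ S' := hgin _ hr
    obtain ⟨j, η, hη, he⟩ := (hmem _).mp (hsub' hu')
    have h1 : dist (γ (σ * L a b c i)) (P a b c i) = σ * L a b c i := by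
      conv_lhs => rw [← hg0]
      rw [hgd _ hr 0 ⟨le_refl _, dist_nonneg⟩, sub_zero, abs_of_nonneg hr0]
    have h2 : dist (γ (σ * L a b c i)) (Q a b c) = (1 - σ) * L a b c i := by
      conv_lhs => rw [← hg1]
      rw [hgd _ hr _ ⟨dist_nonneg, le_refl _⟩, hdPQ,
        abs_of_nonpos (by linarith : σ * L a b c i - L a b c i ≤ 0)]
      ring
    rw [he] at h1 h2 hu'
    rwa [rep_unique G hσ hη h1 h2] at hu'
  -- 5. tight span
  have hPmem : ∀ k : Fin 3,
      P a b c k ∈ ({((0:ℝ),c), ((0:ℝ),(0:ℝ)), (b,a)} : Set (ℝ × ℝ)) := by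
    intro k; fin_cases k <;> simp [P]
  have hXrep : ∀ x : ↥({((0:ℝ),c), ((0:ℝ),(0:ℝ)), (b,a)} : Set (ℝ × ℝ)),
      ∃ k : Fin 3, (x : ℝ × ℝ) = P a b c k := by
    intro x
    have hx := x.2
    simp only [mem_insert_iff, mem_singleton_iff] at hx
    rcases hx with h | h | h
    exacts [⟨0, h⟩, ⟨1, h⟩, ⟨2, h⟩]
  haveI hXne : Nonempty ↥({((0:ℝ),c), ((0:ℝ),(0:ℝ)), (b,a)} : Set (ℝ × ℝ)) :=
    ⟨⟨_, hPmem 0⟩⟩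
  have tri' : ∀ (w : ℝ × ℝ) (x y : ↥({((0:ℝ),c), ((0:ℝ),(0:ℝ)), (b,a)} : Set (ℝ × ℝ))),
      dist (x : ℝ × ℝ) (y : ℝ × ℝ) ≤ dist w x + dist w y := by
    intro w x y
    rw [dist_comm w (x : ℝ × ℝ)]
    exact dist_triangle _ _ _
  have hTS : ∀ u ∈ S, (fun x : ↥({((0:ℝ),c), ((0:ℝ),(0:ℝ)), (b,a)} : Set (ℝ × ℝ)) =>
      dist u (x : ℝ × ℝ)) ∈ TightSpanSet {((0:ℝ),c), ((0:ℝ),(0:ℝ)), (b,a)} := by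
    intro u hu
    obtain ⟨i, σ, hσ, rfl⟩ := (hmem u).mp hu
    refine ⟨fun x => dist_nonneg, fun x y => tri' _ x y, fun x => ?_⟩
    obtain ⟨k, hk⟩ := hXrep x
    have hwit : ∃ m : Fin 3,
        dist (leg a b c i σ) (P a b c k) + dist (leg a b c i σ) (P a b c m)
          - dist (P a b c k) (P a b c m) = 0 := by
      by_cases hki : k = i
      · subst hki
        refine ⟨if k = 0 then 1 else 0, ?_⟩
        have hmne : (if k = 0 then (1 : Fin 3) else 0) ≠ k := by
          by_cases h0 : k = 0
          · subst h0; simp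
          · simp only [if_neg h0]; exact fun h => h0 h.symm
        have hkm : k ≠ (if k = 0 then (1 : Fin 3) else 0) := fun h => hmne h.symm
        rw [dist_leg_P_self G k hσ, dist_leg_P_ne G hkm hσ, dist_P_P G hkm]
        ring
      · refine ⟨i, ?_⟩
        rw [dist_leg_P_ne G (fun h => hki h.symm) hσ, dist_leg_P_self G i hσ,
          dist_P_P G hki]
        ring
    obtain ⟨m, hm0⟩ := hwit
    apply le_antisymm
    · have hbdd : BddBelow (range fun y : ↥({((0:ℝ),c), ((0:ℝ),(0:ℝ)), (b,a)} : Set (ℝ × ℝ)) =>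
          dist (leg a b c i σ) (x : ℝ × ℝ) + dist (leg a b c i σ) (y : ℝ × ℝ)
            - dist (x : ℝ × ℝ) (y : ℝ × ℝ)) := by
        refine ⟨0, ?_⟩
        rintro z ⟨y, rfl⟩
        have := tri' (leg a b c i σ) x y
        simp only
        linarith
      have hle := ciInf_le hbdd (⟨P a b c m, hPmem m⟩ :
        ↥({((0:ℝ),c), ((0:ℝ),(0:ℝ)), (b,a)} : Set (ℝ × ℝ)))
      refine le_of_le_of_eq hle ?_
      show dist (leg a b c i σ) (x : ℝ × ℝ) + dist (leg a b c i σ) (P a b c m)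
          - dist (x : ℝ × ℝ) (P a b c m) = 0
      rw [hk]
      exact hm0
    · apply le_ciInf
      intro y
      have := tri' (leg a b c i σ) x y
      linarith
  have hsup : ∀ u v : ↥S,
      (⨆ x : ↥({((0:ℝ),c), ((0:ℝ),(0:ℝ)), (b,a)} : Set (ℝ × ℝ)),
        |dist (u : ℝ × ℝ) (x : ℝ × ℝ) - dist (v : ℝ × ℝ) (x : ℝ × ℝ)|) = dist u v := by
    intro u v
    obtain ⟨i, σ, hσ, hui⟩ := (hmem u.1).mp u.2
    obtain ⟨j, η, hη, hvj⟩ := (hmem v.1).mp v.2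
    have hduv : dist u v = dist (u : ℝ × ℝ) (v : ℝ × ℝ) := Subtype.dist_eq u v
    have hbddA : BddAbove (range fun x : ↥({((0:ℝ),c), ((0:ℝ),(0:ℝ)), (b,a)} : Set (ℝ × ℝ)) =>
        |dist (u : ℝ × ℝ) (x : ℝ × ℝ) - dist (v : ℝ × ℝ) (x : ℝ × ℝ)|) := by
      refine ⟨dist (u : ℝ × ℝ) (v : ℝ × ℝ), ?_⟩
      rintro z ⟨x, rfl⟩
      exact abs_dist_sub_le _ _ _
    rw [hduv]
    apply le_antisymm
    · exact ciSup_le fun x => abs_dist_sub_le _ _ _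
    · have hwitness : |dist (u : ℝ × ℝ) (P a b c i) - dist (v : ℝ × ℝ) (P a b c i)|
          = dist (u : ℝ × ℝ) (v : ℝ × ℝ) := by
        rw [hui, hvj]
        by_cases hij : i = j
        · subst hij
          rw [dist_leg_P_self G i hσ, dist_leg_P_self G i hη, dist_leg_leg_same G i hσ hη]
          exact (abs_mul_L (L_nonneg G i)).symm
        · rw [dist_leg_P_self G i hσ, dist_leg_P_ne G (fun h => hij h.symm) hη,
            dist_leg_leg_ne G hij hσ hη]
          have hLi := L_nonneg G i
          have hLj := L_nonneg G j
          have k1 : 0 ≤ (1 - σ) * L a b c i := mul_nonneg (by linarith [hσ.2]) hLi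
          have k2 : 0 ≤ (1 - η) * L a b c j := mul_nonneg (by linarith [hη.2]) hLj
          rw [abs_of_nonpos (by nlinarith)]
          ring
      exact le_of_eq_of_le hwitness.symm
        (le_ciSup hbddA (⟨P a b c i, hPmem i⟩ :
          ↥({((0:ℝ),c), ((0:ℝ),(0:ℝ)), (b,a)} : Set (ℝ × ℝ))))
  refine ⟨hclosed, hgeo, hsub, hmin,
    fun u => ⟨fun x => dist u.1 (x : ℝ × ℝ), hTS u.1 u.2⟩, ⟨?_, ?_⟩, fun u v => hsup u v⟩
  -- injectivity
  · intro u v huv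
    have heq : ∀ x : ↥({((0:ℝ),c), ((0:ℝ),(0:ℝ)), (b,a)} : Set (ℝ × ℝ)),
        dist (u : ℝ × ℝ) (x : ℝ × ℝ) = dist (v : ℝ × ℝ) (x : ℝ × ℝ) :=
      fun x => congrFun (congrArg Subtype.val huv) x
    have h0 : dist u v = 0 := by
      rw [← hsup u v]
      have he : (fun x : ↥({((0:ℝ),c), ((0:ℝ),(0:ℝ)), (b,a)} : Set (ℝ × ℝ)) =>
          |dist (u : ℝ × ℝ) (x : ℝ × ℝ) - dist (v : ℝ × ℝ) (x : ℝ × ℝ)|) = fun _ => 0 := by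
        funext x
        rw [heq x, sub_self, abs_zero]
      rw [he]
      exact ciSup_const
    exact eq_of_dist_eq_zero h0
  -- surjectivity
  · intro f
    obtain ⟨hf0, hf1, hf2⟩ := f.2
    have htb : ∀ k l : Fin 3, k ≠ l →
        L a b c k + L a b c l ≤ f.1 ⟨P a b c k, hPmem k⟩ + f.1 ⟨P a b c l, hPmem l⟩ := by
      intro k l hkl
      have h := hf1 ⟨P a b c k, hPmem k⟩ ⟨P a b c l, hPmem l⟩
      rwa [show dist ((⟨P a b c k, hPmem k⟩ :
          ↥({((0:ℝ),c), ((0:ℝ),(0:ℝ)), (b,a)} : Set (ℝ × ℝ))) : ℝ × ℝ)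
          ((⟨P a b c l, hPmem l⟩ :
          ↥({((0:ℝ),c), ((0:ℝ),(0:ℝ)), (b,a)} : Set (ℝ × ℝ))) : ℝ × ℝ)
          = L a b c k + L a b c l from dist_P_P G hkl] at h
    have hgnn : ∀ k : Fin 3, 0 ≤ f.1 ⟨P a b c k, hPmem k⟩ := fun k => hf0 _
    have fin3 : ∀ m : Fin 3, m = 0 ∨ m = 1 ∨ m = 2 := by decide
    have hE : ∀ k : Fin 3, ∃ m : Fin 3,
        f.1 ⟨P a b c k, hPmem k⟩ + f.1 ⟨P a b c m, hPmem m⟩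
          - dist (P a b c k) (P a b c m) = 0 := by
      intro k
      have hinf := hf2 ⟨P a b c k, hPmem k⟩
      set F : ↥({((0:ℝ),c), ((0:ℝ),(0:ℝ)), (b,a)} : Set (ℝ × ℝ)) → ℝ :=
        fun y => f.1 ⟨P a b c k, hPmem k⟩ + f.1 y
          - dist ((⟨P a b c k, hPmem k⟩ :
            ↥({((0:ℝ),c), ((0:ℝ),(0:ℝ)), (b,a)} : Set (ℝ × ℝ))) : ℝ × ℝ) (y : ℝ × ℝ) with hF
      have hFnn : ∀ y, 0 ≤ F y := by
        intro y
        have h := hf1 ⟨P a b c k, hPmem k⟩ y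
        rw [hF]
        simp only
        linarith
      have hmin3 : min (F ⟨P a b c 0, hPmem 0⟩)
          (min (F ⟨P a b c 1, hPmem 1⟩) (F ⟨P a b c 2, hPmem 2⟩)) ≤ 0 := by
        refine le_trans (le_ciInf fun y => ?_) (le_of_eq hinf)
        obtain ⟨m, hm⟩ := hXrep y
        have hy : y = (⟨P a b c m, hPmem m⟩ :
          ↥({((0:ℝ),c), ((0:ℝ),(0:ℝ)), (b,a)} : Set (ℝ × ℝ))) := Subtype.ext hm
        rw [hy]
        rcases fin3 m with rfl | rfl | rfl
        · exact min_le_left _ _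
        · exact le_trans (min_le_right _ _) (min_le_left _ _)
        · exact le_trans (min_le_right _ _) (min_le_right _ _)
      rcases min_le_iff.mp hmin3 with h | h
      · exact ⟨0, le_antisymm h (hFnn _)⟩
      · rcases min_le_iff.mp h with h' | h'
        · exact ⟨1, le_antisymm h' (hFnn _)⟩
        · exact ⟨2, le_antisymm h' (hFnn _)⟩
    have mkE : ∀ k : Fin 3, ∃ m : Fin 3,
        f.1 ⟨P a b c k, hPmem k⟩ + f.1 ⟨P a b c m, hPmem m⟩
          - dist (P a b c k) (P a b c m) = 0 := hE
    have E1 : f.1 ⟨P a b c 0, hPmem 0⟩ = 0 ∨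
        f.1 ⟨P a b c 0, hPmem 0⟩ + f.1 ⟨P a b c 1, hPmem 1⟩ = L a b c 0 + L a b c 1 ∨
        f.1 ⟨P a b c 0, hPmem 0⟩ + f.1 ⟨P a b c 2, hPmem 2⟩ = L a b c 0 + L a b c 2 := by
      obtain ⟨m, hm⟩ := mkE 0
      rcases fin3 m with rfl | rfl | rfl
      · rw [dist_self] at hm; left; linarith
      · rw [dist_P_P G (by decide)] at hm; right; left; linarith
      · rw [dist_P_P G (by decide)] at hm; right; right; linarith
    have E2 : f.1 ⟨P a b c 0, hPmem 0⟩ + f.1 ⟨P a b c 1, hPmem 1⟩ = L a b c 0 + L a b c 1 ∨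
        f.1 ⟨P a b c 1, hPmem 1⟩ = 0 ∨
        f.1 ⟨P a b c 1, hPmem 1⟩ + f.1 ⟨P a b c 2, hPmem 2⟩ = L a b c 1 + L a b c 2 := by
      obtain ⟨m, hm⟩ := mkE 1
      rcases fin3 m with rfl | rfl | rfl
      · rw [dist_P_P G (by decide)] at hm; left; linarith
      · rw [dist_self] at hm; right; left; linarith
      · rw [dist_P_P G (by decide)] at hm; right; right; linarith
    have E3 : f.1 ⟨P a b c 0, hPmem 0⟩ + f.1 ⟨P a b c 2, hPmem 2⟩ = L a b c 0 + L a b c 2 ∨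
        f.1 ⟨P a b c 1, hPmem 1⟩ + f.1 ⟨P a b c 2, hPmem 2⟩ = L a b c 1 + L a b c 2 ∨
        f.1 ⟨P a b c 2, hPmem 2⟩ = 0 := by
      obtain ⟨m, hm⟩ := mkE 2
      rcases fin3 m with rfl | rfl | rfl
      · rw [dist_P_P G (by decide)] at hm; left; linarith
      · rw [dist_P_P G (by decide)] at hm; right; left; linarith
      · rw [dist_self] at hm; right; right; linarith
    have key := surj_arith (L_nonneg G 0) (L_nonneg G 1) (L_nonneg G 2)
      (hgnn 0) (hgnn 1) (hgnn 2) (htb 0 1 (by decide)) (htb 0 2 (by decide))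
      (htb 1 2 (by decide)) E1 E2 E3
    have buildU : ∀ i : Fin 3, ∀ g : Fin 3 → ℝ, (∀ k, g k = f.1 ⟨P a b c k, hPmem k⟩) →
        0 ≤ g i → g i ≤ L a b c i → (∀ j, j ≠ i → g j = L a b c i + L a b c j - g i) →
        ∃ u : ↥S, (⟨fun x => dist u.1 (x : ℝ × ℝ), hTS u.1 u.2⟩ :
          ↥(TightSpanSet {((0:ℝ),c), ((0:ℝ),(0:ℝ)), (b,a)})) = f := by
      intro i g hgdef hgi hle heq
      obtain ⟨θ, hθ, hprof⟩ := profile G i hgi hle heq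
      refine ⟨⟨leg a b c i θ, hmem' i θ hθ⟩, ?_⟩
      apply Subtype.ext
      funext x
      obtain ⟨k, hk⟩ := hXrep x
      have hx : x = (⟨P a b c k, hPmem k⟩ :
        ↥({((0:ℝ),c), ((0:ℝ),(0:ℝ)), (b,a)} : Set (ℝ × ℝ))) := Subtype.ext hk
      rw [hx]
      show dist (leg a b c i θ) (P a b c k) = f.1 ⟨P a b c k, hPmem k⟩
      rw [hprof k, hgdef k]
    set g : Fin 3 → ℝ := fun k => f.1 ⟨P a b c k, hPmem k⟩ with hg
    rcases key with ⟨h1, h2, h3⟩ | ⟨h1, h2, h3⟩ | ⟨h1, h2, h3⟩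
    · refine buildU 0 g (fun k => rfl) (hgnn 0) h1 ?_
      intro j hj
      rcases fin3 j with rfl | rfl | rfl
      · exact absurd rfl hj
      · exact h2
      · exact h3
    · refine buildU 1 g (fun k => rfl) (hgnn 1) h1 ?_
      intro j hj
      rcases fin3 j with rfl | rfl | rfl
      · show f.1 ⟨P a b c 0, hPmem 0⟩ = L a b c 1 + L a b c 0 - f.1 ⟨P a b c 1, hPmem 1⟩
        rw [h2]; ring
      · exact absurd rfl hj
      · exact h3
    · refine buildU 2 g (fun k => rfl) (hgnn 2) h1 ?_
      intro j hj
      rcases fin3 j with rfl | rfl | rfl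
      · show f.1 ⟨P a b c 0, hPmem 0⟩ = L a b c 2 + L a b c 0 - f.1 ⟨P a b c 2, hPmem 2⟩
        rw [h2]; ring
      · show f.1 ⟨P a b c 1, hPmem 1⟩ = L a b c 2 + L a b c 1 - f.1 ⟨P a b c 2, hPmem 2⟩
        rw [h3]; ring
      · exact absurd rfl hj
end

section
/- Let X = {P₁, P₂, P₃, P₄} be a four-point metric space with d(P₂,P₃) = a, d(P₁,P₃) = b, d(P₁,P₂) = c, d(P₁,P₄) = d, d(P₂,P₄) = e, d(P₃,P₄) = f, satisfying c + f ≤ b + e ≤ a + d. Then the map sending P₁ ↦ (e−d, c), P₂ ↦ (0,0), P₃ ↦ (b+e−d, a), P₄ ↦ (e, a−f) is an isometric embedding of X into the l∞ plane ℝ²_∞. -/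
/-! Each of the six sup-distances is attained in one coordinate, where it equals the prescribed
distance by construction, and the other coordinate difference is at most that distance. For four
of the pairs this is a reverse triangle inequality (`|d - e| ≤ c`, `|a - c| ≤ b`, `|a - f| ≤ e`,
`|b - d| ≤ f`); the remaining two, `|c + f - a| ≤ d` and `|b + e - d| ≤ a`, follow from the
triangle inequality combined with `c + f ≤ b + e ≤ a + d`. -/

namespace Prod

variable {α β : Type*} [PseudoMetricSpace α] [PseudoMetricSpace β] {a₁ a₂ : α} {b₁ b₂ : β}
  {r : ℝ}

theorem dist_mk_eq_of_fst (h₁ : dist a₁ a₂ = r) (h₂ : dist b₁ b₂ ≤ r) :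
    dist (a₁, b₁) (a₂, b₂) = r := by
  rw [Prod.dist_eq, h₁, max_eq_left h₂]

theorem dist_mk_eq_of_snd (h₁ : dist a₁ a₂ ≤ r) (h₂ : dist b₁ b₂ = r) :
    dist (a₁, b₁) (a₂, b₂) = r := by
  rw [Prod.dist_eq, h₂, max_eq_right h₁]

end Prod

namespace Real

variable {x y r : ℝ}

theorem dist_le_of_le_add (h₁ : x ≤ y + r) (h₂ : y ≤ x + r) : dist x y ≤ r := by
  rw [Real.dist_eq, abs_sub_le_iff]
  constructor <;> linarith

theorem dist_eq_of_add_eq (hr : 0 ≤ r) (h : x + r = y) : dist x y = r := by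
  rw [Real.dist_eq, ← h, sub_add_cancel_left, abs_neg, abs_of_nonneg hr]

theorem dist_eq_of_eq_add (hr : 0 ≤ r) (h : x = y + r) : dist x y = r := by
  rw [dist_comm]
  exact dist_eq_of_add_eq hr h.symm

end Real

/-- A four-point metric space with `d(P₂,P₃) = a`, `d(P₁,P₃) = b`,
`d(P₁,P₂) = c`, `d(P₁,P₄) = d`, `d(P₂,P₄) = e`, `d(P₃,P₄) = f` and
`c + f ≤ b + e ≤ a + d` embeds isometrically in the `l∞` plane via
`P₁ ↦ (e−d, c)`, `P₂ ↦ (0,0)`, `P₃ ↦ (b+e−d, a)`, `P₄ ↦ (e, a−f)`. -/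
theorem four_point_embeds {X : Type*} [MetricSpace X] (P₁ P₂ P₃ P₄ : X)
    (a b c d e f : ℝ)
    (ha : dist P₂ P₃ = a) (hb : dist P₁ P₃ = b) (hc : dist P₁ P₂ = c)
    (hd : dist P₁ P₄ = d) (he : dist P₂ P₄ = e) (hf : dist P₃ P₄ = f)
    (h1 : c + f ≤ b + e) (h2 : b + e ≤ a + d) :
    dist ((e - d, c) : ℝ × ℝ) ((0, 0) : ℝ × ℝ) = c ∧
    dist ((e - d, c) : ℝ × ℝ) ((b + e - d, a) : ℝ × ℝ) = b ∧
    dist ((e - d, c) : ℝ × ℝ) ((e, a - f) : ℝ × ℝ) = d ∧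
    dist ((0, 0) : ℝ × ℝ) ((b + e - d, a) : ℝ × ℝ) = a ∧
    dist ((0, 0) : ℝ × ℝ) ((e, a - f) : ℝ × ℝ) = e ∧
    dist ((b + e - d, a) : ℝ × ℝ) ((e, a - f) : ℝ × ℝ) = f := by
  have hd_ce : d ≤ c + e := by linarith [dist_triangle P₁ P₂ P₄]
  have he_cd : e ≤ c + d := by linarith [dist_triangle_left P₂ P₄ P₁]
  have hc_ab : c ≤ a + b := by linarith [dist_triangle_right P₁ P₂ P₃]
  have ha_bc : a ≤ b + c := by linarith [dist_triangle_left P₂ P₃ P₁]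
  have ha_ef : a ≤ e + f := by linarith [dist_triangle_right P₂ P₃ P₄]
  have hf_ae : f ≤ a + e := by linarith [dist_triangle_left P₃ P₄ P₂]
  have hb_df : b ≤ d + f := by linarith [dist_triangle_right P₁ P₃ P₄]
  have hd_bf : d ≤ b + f := by linarith [dist_triangle P₁ P₃ P₄]
  refine ⟨?_, ?_, ?_, ?_, ?_, ?_⟩
  · refine Prod.dist_mk_eq_of_snd (Real.dist_le_of_le_add ?_ ?_) (Real.dist_eq_of_eq_add ?_ ?_)
      <;> linarith
  · refine Prod.dist_mk_eq_of_fst (Real.dist_eq_of_add_eq ?_ ?_) (Real.dist_le_of_le_add ?_ ?_)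
      <;> linarith
  · refine Prod.dist_mk_eq_of_fst (Real.dist_eq_of_add_eq ?_ ?_) (Real.dist_le_of_le_add ?_ ?_)
      <;> linarith
  · refine Prod.dist_mk_eq_of_snd (Real.dist_le_of_le_add ?_ ?_) (Real.dist_eq_of_add_eq ?_ ?_)
      <;> linarith
  · refine Prod.dist_mk_eq_of_fst (Real.dist_eq_of_add_eq ?_ ?_) (Real.dist_le_of_le_add ?_ ?_)
      <;> linarith
  · refine Prod.dist_mk_eq_of_snd (Real.dist_le_of_le_add ?_ ?_) (Real.dist_eq_of_eq_add ?_ ?_)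
      <;> linarith
end

section
/- The plane L = {(x,y,z) ∈ ℝ³ : x + y + z = 0}, equipped with the metric induced from ℝ³_∞, is not hyperconvex: there exist three points of L and nonnegative radii r₁, r₂, r₃ with pairwise distances d∞(x_i,x_j) ≤ r_i + r_j such that the three closed balls in L of radius r_i around x_i have empty intersection. -/
/-- The plane `L = {(x,y,z) ∈ ℝ³ : x + y + z = 0}`, with the metric induced
from `ℝ³_∞`, is not hyperconvex: there are three points of `L` and nonnegative
radii with `d∞(x_i,x_j) ≤ r_i + r_j` whose closed balls in `L` have empty
intersection. -/
theorem plane_not_hyperconvex :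
    ∃ (x₁ x₂ x₃ : ({v : Fin 3 → ℝ | v 0 + v 1 + v 2 = 0} : Set (Fin 3 → ℝ)))
      (r₁ r₂ r₃ : ℝ),
      0 ≤ r₁ ∧ 0 ≤ r₂ ∧ 0 ≤ r₃ ∧
      dist x₁ x₂ ≤ r₁ + r₂ ∧ dist x₁ x₃ ≤ r₁ + r₃ ∧ dist x₂ x₃ ≤ r₂ + r₃ ∧
      ¬∃ z : ({v : Fin 3 → ℝ | v 0 + v 1 + v 2 = 0} : Set (Fin 3 → ℝ)),
        dist x₁ z ≤ r₁ ∧ dist x₂ z ≤ r₂ ∧ dist x₃ z ≤ r₃ := by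
  refine ⟨⟨![2,-1,-1], by show (2:ℝ) + -1 + -1 = 0; norm_num⟩, ⟨![-1,2,-1], by show (-1:ℝ) + 2 + -1 = 0; norm_num⟩,
    ⟨![-1,-1,2], by show (-1:ℝ) + -1 + 2 = 0; norm_num⟩, 3/2, 3/2, 3/2, by norm_num, by norm_num, by norm_num,
    ?_, ?_, ?_, ?_⟩
  · rw [Subtype.dist_eq, dist_pi_le_iff (by norm_num)]
    intro i
    fin_cases i <;> simp [Real.dist_eq] <;> norm_num
  · rw [Subtype.dist_eq, dist_pi_le_iff (by norm_num)]
    intro i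
    fin_cases i <;> simp [Real.dist_eq] <;> norm_num
  · rw [Subtype.dist_eq, dist_pi_le_iff (by norm_num)]
    intro i
    fin_cases i <;> simp [Real.dist_eq] <;> norm_num
  · rintro ⟨⟨z, hz⟩, h1, h2, h3⟩
    rw [Subtype.dist_eq] at h1 h2 h3
    have c1 := (dist_le_pi_dist _ _ 0).trans h1
    have c2 := (dist_le_pi_dist _ _ 0).trans h2
    have c3 := (dist_le_pi_dist _ _ 1).trans h1
    have c4 := (dist_le_pi_dist _ _ 1).trans h2
    have c5 := (dist_le_pi_dist _ _ 2).trans h1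
    have c6 := (dist_le_pi_dist _ _ 2).trans h3
    simp only [Real.dist_eq, Matrix.cons_val_zero, Matrix.cons_val_one, Matrix.head_cons,
      Matrix.cons_val_two, Matrix.tail_cons, abs_le] at c1 c2 c3 c4 c5 c6
    simp only [Set.mem_setOf_eq] at hz
    linarith [c1.2, c2.1, c3.1, c4.2, c5.1, c6.2]
end

section
/- There exists a nonempty, closed and geodesically convex subset of ℝ³_∞ that is not hyperconvex (with the induced metric); for example, the plane L = {(x,y,z) ∈ ℝ³ : x + y + z = 0} is such a set. Hence the statement 'every nonempty closed geodesically convex subset is hyperconvex', which holds in ℝ²_∞, fails in ℝ³_∞. -/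
/-- A metric space is hyperconvex if every family of closed balls whose radii
satisfy the pairwise condition `dist (x i) (x j) ≤ r i + r j` has nonempty
intersection. -/
def Hyperconvex (X : Type*) [MetricSpace X] : Prop :=
  ∀ (ι : Type) (x : ι → X) (r : ι → ℝ),
    (∀ i, 0 ≤ r i) → (∀ i j, dist (x i) (x j) ≤ r i + r j) →
    (⋂ i, {y : X | dist (x i) y ≤ r i}).Nonempty

open Set

theorem isGeodesic_lineMap {V P : Type*} [NormedAddCommGroup V] [NormedSpace ℝ V]
    [MetricSpace P] [NormedAddTorsor V P] (p q : P) :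
    IsGeodesic p q fun t => AffineMap.lineMap p q (t / dist p q) := by
  refine ⟨by simp, ?_, fun s hs t ht => ?_⟩
  · rcases eq_or_ne p q with rfl | hpq
    · simp
    · simp [div_self (dist_ne_zero.mpr hpq)]
  · rcases eq_or_ne p q with rfl | hpq
    · simp only [dist_self, Icc_self, mem_singleton_iff] at hs ht
      simp [hs, ht]
    · have hd : dist p q ≠ 0 := dist_ne_zero.mpr hpq
      rw [dist_lineMap_lineMap, Real.dist_eq, ← sub_div, abs_div, abs_dist,
        div_mul_cancel₀ _ hd]

theorem Convex.geodConvex {E : Type*} [NormedAddCommGroup E] [NormedSpace ℝ E] {s : Set E}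
    (hs : Convex ℝ s) : GeodConvex s := fun p hp q hq =>
  ⟨_, isGeodesic_lineMap p q, fun _ ht =>
    hs.lineMap_mem hp hq ⟨div_nonneg ht.1 dist_nonneg, div_le_one_of_le₀ ht.2 dist_nonneg⟩⟩

def sumZeroPlane : Set (Fin 3 → ℝ) := {v | v 0 + v 1 + v 2 = 0}

theorem isClosed_sumZeroPlane : IsClosed sumZeroPlane :=
  isClosed_eq (by fun_prop) continuous_const

theorem convex_sumZeroPlane : Convex ℝ sumZeroPlane :=
  convex_hyperplane ⟨fun v w => by simp only [Pi.add_apply]; ring,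
    fun c v => by simp only [Pi.smul_apply, smul_eq_mul]; ring⟩ 0

def sumZeroPlaneCorner (i : Fin 3) : sumZeroPlane :=
  ⟨fun k => if k = i then -2 else 1, by
    fin_cases i <;> simp [sumZeroPlane] <;> norm_num⟩

theorem dist_sumZeroPlaneCorner_le (i j : Fin 3) :
    dist (sumZeroPlaneCorner i) (sumZeroPlaneCorner j) ≤ 3 / 2 + 3 / 2 := by
  have hIcc (i k : Fin 3) : (sumZeroPlaneCorner i : Fin 3 → ℝ) k ∈ Icc (-2 : ℝ) 1 := by
    simp only [sumZeroPlaneCorner]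
    split_ifs <;> norm_num
  rw [Subtype.dist_eq, dist_pi_le_iff (by norm_num)]
  intro k
  linarith [Real.dist_le_of_mem_Icc (hIcc i k) (hIcc j k)]

theorem not_hyperconvex_sumZeroPlane : ¬ Hyperconvex sumZeroPlane := by
  intro h
  obtain ⟨y, hy⟩ := h (Fin 3) sumZeroPlaneCorner (fun _ => 3 / 2) (fun _ => by norm_num)
    dist_sumZeroPlaneCorner_le
  simp only [mem_iInter, mem_ofPred_eq] at hy
  have hneg (k : Fin 3) : (y : Fin 3 → ℝ) k ≤ -1 / 2 := by
    have hk := (dist_le_pi_dist _ _ k).trans ((Subtype.dist_eq _ _).symm.trans_le (hy k))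
    rw [Real.dist_eq, abs_le] at hk
    simp only [sumZeroPlaneCorner, ↓reduceIte] at hk
    linarith [hk.1]
  have hy_mem : (y : Fin 3 → ℝ) 0 + (y : Fin 3 → ℝ) 1 + (y : Fin 3 → ℝ) 2 = 0 := y.2
  linarith [hneg 0, hneg 1, hneg 2]

/-- There is a nonempty, closed, geodesically convex subset of `ℝ³_∞` that is
not hyperconvex with the induced metric; the plane `x + y + z = 0` is an
example. So the two-dimensional theorem fails in `ℝ³_∞`. -/
theorem exists_closed_geodConvex_not_hyperconvex :
    ∃ A : Set (Fin 3 → ℝ), A = {v : Fin 3 → ℝ | v 0 + v 1 + v 2 = 0} ∧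
      A.Nonempty ∧ IsClosed A ∧ GeodConvex A ∧ ¬ Hyperconvex ↥A :=
  ⟨sumZeroPlane, rfl, ⟨0, by simp [sumZeroPlane]⟩, isClosed_sumZeroPlane,
    convex_sumZeroPlane.geodConvex, not_hyperconvex_sumZeroPlane⟩
end
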